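/- arXiv:1708.01298 — 4 statements merged into one kernel-verified Lean document; each statement's English description precedes it below -/
import Mathlib

section
/- Let A be a d×d real matrix with singular value decomposition A = U Σ Vᵀ, where U, V ∈ ℝ^{d×d} are orthogonal matrices and Σ ∈ ℝ^{d×d} is diagonal with nonnegative entries σ₁ ≥ σ₂ ≥ … ≥ σ_d. For k ≤ d, let U_k, V_k ∈ ℝ^{d×k} consist of the first k columns of U and V respectively, let Σ_k ∈ ℝ^{k×k} be the diagonal matrix with entries σ₁, …, σ_k, and let Σ_k† ∈ ℝ^{k×k} be the diagonal matrix whose i-th diagonal entry is 1/σᵢ if σᵢ ≠ 0 and 0 otherwise. Then the matrix V_k Σ_k† ∈ ℝ^{d×k} is a Moore–Penrose pseudoinverse of the sketched matrix U_kᵀ A ∈ ℝ^{k×d}; consequently, for every b ∈ ℝ^d, the truncated-SVD solution V_k Σ_k† U_kᵀ b equals (U_kᵀ A)† (U_kᵀ b), i.e., the left-sketched LSTD solution with sketching matrix S_L = U_kᵀ coincides with the tLSTD solution. -/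
open Matrix

/-- `P` is a Moore–Penrose pseudoinverse of `M`. -/
def IsMoorePenroseInv {k d : ℕ} (M : Matrix (Fin k) (Fin d) ℝ)
    (P : Matrix (Fin d) (Fin k) ℝ) : Prop :=
  M * P * M = M ∧ P * M * P = P ∧ (M * P)ᵀ = M * P ∧ (P * M)ᵀ = P * M

/-!
Orthogonality of `U` collapses the sketched matrix to `U_kᵀ A = Σ_k V_kᵀ`, and `V_k` has
orthonormal columns. A diagonal matrix has the entrywise inverse (with `0⁻¹ = 0`) as its
Moore–Penrose pseudoinverse, and right multiplication by `V_kᵀ` transports this to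
`(Σ_k V_kᵀ)† = V_k Σ_k†`. The second claim is then uniqueness of the pseudoinverse.
-/

namespace IsMoorePenroseInv

variable {k d : ℕ}

theorem mul_eq_mul_and_mul_eq_mul {M : Matrix (Fin k) (Fin d) ℝ}
    {P₁ P₂ : Matrix (Fin d) (Fin k) ℝ}
    (h₁ : IsMoorePenroseInv M P₁) (h₂ : IsMoorePenroseInv M P₂) :
    M * P₁ = M * P₂ ∧ P₁ * M = P₂ * M := by
  obtain ⟨h₁MPM, -, h₁MP, h₁PM⟩ := h₁
  obtain ⟨h₂MPM, -, h₂MP, h₂PM⟩ := h₂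
  constructor
  · calc M * P₁ = (M * P₂ * M) * P₁ := by rw [h₂MPM]
      _ = ((M * P₁)ᵀ * (M * P₂)ᵀ)ᵀ := by
        simp only [transpose_mul, transpose_transpose, Matrix.mul_assoc]
      _ = (M * P₁ * M * P₂)ᵀ := by rw [h₁MP, h₂MP, Matrix.mul_assoc (M * P₁)]
      _ = M * P₂ := by rw [h₁MPM, h₂MP]
  · calc P₁ * M = P₁ * (M * P₂ * M) := by rw [h₂MPM]
      _ = ((P₂ * M)ᵀ * (P₁ * M)ᵀ)ᵀ := by
        simp only [transpose_mul, transpose_transpose, Matrix.mul_assoc]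
      _ = (P₂ * (M * P₁ * M))ᵀ := by rw [h₁PM, h₂PM, Matrix.mul_assoc, Matrix.mul_assoc]
      _ = P₂ * M := by rw [h₁MPM, h₂PM]

theorem unique {M : Matrix (Fin k) (Fin d) ℝ} {P₁ P₂ : Matrix (Fin d) (Fin k) ℝ}
    (h₁ : IsMoorePenroseInv M P₁) (h₂ : IsMoorePenroseInv M P₂) : P₁ = P₂ := by
  obtain ⟨hMP, hPM⟩ := mul_eq_mul_and_mul_eq_mul h₁ h₂
  calc P₁ = P₁ * M * P₁ := h₁.2.1.symm
    _ = P₂ * (M * P₂) := by rw [hPM, Matrix.mul_assoc, hMP]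
    _ = P₂ := by rw [← Matrix.mul_assoc, h₂.2.1]

theorem diagonal_inv (s : Fin k → ℝ) : IsMoorePenroseInv (diagonal s) (diagonal s⁻¹) := by
  simpa [IsMoorePenroseInv, diagonal_mul_diagonal] using fun i => mul_inv_mul_cancel (s i)⁻¹

theorem mul_transpose_of_transpose_mul_self {m : ℕ} {M : Matrix (Fin k) (Fin m) ℝ}
    {P : Matrix (Fin m) (Fin k) ℝ} (h : IsMoorePenroseInv M P) {Q : Matrix (Fin d) (Fin m) ℝ}
    (hQ : Qᵀ * Q = 1) : IsMoorePenroseInv (M * Qᵀ) (Q * P) := by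
  obtain ⟨hMPM, hPMP, hMP, hPM⟩ := h
  have hMQQP : M * Qᵀ * (Q * P) = M * P := by
    rw [Matrix.mul_assoc, ← Matrix.mul_assoc Qᵀ, hQ, Matrix.one_mul]
  refine ⟨?_, ?_, ?_, ?_⟩
  · rw [hMQQP, ← Matrix.mul_assoc, hMPM]
  · rw [Matrix.mul_assoc, hMQQP, Matrix.mul_assoc, ← Matrix.mul_assoc P, hPMP]
  · rw [hMQQP, hMP]
  · have hQPMQ : Q * P * (M * Qᵀ) = Q * (P * M) * Qᵀ := by simp only [Matrix.mul_assoc]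
    rw [hQPMQ, transpose_mul, transpose_mul, transpose_transpose, hPM, ← Matrix.mul_assoc]

end IsMoorePenroseInv

theorem transpose_submatrix_mul_svd {m n l : Type*} [Fintype n] [Fintype l] [DecidableEq n]
    [DecidableEq l] {U : Matrix n n ℝ} (hU : Uᵀ * U = 1) (σ : n → ℝ)
    (V : Matrix m n ℝ) (f : l → n) :
    (U.submatrix id f)ᵀ * (U * diagonal σ * Vᵀ) = diagonal (σ ∘ f) * (V.submatrix id f)ᵀ := by
  have hUk : (U.submatrix id f)ᵀ * U = (1 : Matrix n n ℝ).submatrix f id := by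
    rw [transpose_submatrix, ← hU, ← submatrix_id_id U,
      ← submatrix_mul _ _ _ _ _ Function.bijective_id]
    rfl
  rw [← Matrix.mul_assoc, ← Matrix.mul_assoc, hUk]
  ext i j
  simp [mul_apply, one_apply, diagonal_apply]

theorem transpose_submatrix_mul_submatrix_of_transpose_mul_self {m n l : Type*} [Fintype m]
    [DecidableEq n] [DecidableEq l] {Q : Matrix m n ℝ} (hQ : Qᵀ * Q = 1) {f : l → n}
    (hf : Function.Injective f) : (Q.submatrix id f)ᵀ * Q.submatrix id f = 1 := by
  rw [transpose_submatrix, ← submatrix_mul _ _ _ _ _ Function.bijective_id, hQ,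
    submatrix_one _ hf]

theorem tLSTD_eq_left_sketched_LSTD_general
    (d k : ℕ) (hk : k ≤ d)
    (A U V : Matrix (Fin d) (Fin d) ℝ) (σ : Fin d → ℝ)
    (hU : Uᵀ * U = 1) (hV : Vᵀ * V = 1)
    (hA : A = U * Matrix.diagonal σ * Vᵀ) :
    IsMoorePenroseInv ((U.submatrix id (Fin.castLE hk))ᵀ * A)
      ((V.submatrix id (Fin.castLE hk)) *
        Matrix.diagonal (fun i : Fin k =>
          if σ (Fin.castLE hk i) = 0 then 0 else (σ (Fin.castLE hk i))⁻¹)) ∧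
    ∀ P : Matrix (Fin d) (Fin k) ℝ,
      IsMoorePenroseInv ((U.submatrix id (Fin.castLE hk))ᵀ * A) P →
      ∀ b : Fin d → ℝ,
        ((V.submatrix id (Fin.castLE hk)) *
          Matrix.diagonal (fun i : Fin k =>
            if σ (Fin.castLE hk i) = 0 then 0 else (σ (Fin.castLE hk i))⁻¹)).mulVec
          ((U.submatrix id (Fin.castLE hk))ᵀ.mulVec b) =
        P.mulVec ((U.submatrix id (Fin.castLE hk))ᵀ.mulVec b) := by
  have hSketch := transpose_submatrix_mul_svd hU σ V (Fin.castLE hk)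
  have hσ_inv : (fun i : Fin k =>
      if σ (Fin.castLE hk i) = 0 then 0 else (σ (Fin.castLE hk i))⁻¹) =
      (σ ∘ Fin.castLE hk)⁻¹ := by
    ext i
    split_ifs with h <;> simp [h]
  have hVk := transpose_submatrix_mul_submatrix_of_transpose_mul_self hV (Fin.castLE_injective hk)
  have hMP : IsMoorePenroseInv ((U.submatrix id (Fin.castLE hk))ᵀ * A)
      (V.submatrix id (Fin.castLE hk) * diagonal (σ ∘ Fin.castLE hk)⁻¹) := by
    rw [hA, hSketch]
    exact (IsMoorePenroseInv.diagonal_inv _).mul_transpose_of_transpose_mul_self hVk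
  rw [hσ_inv]
  exact ⟨hMP, fun P hP b => by rw [hMP.unique hP]⟩

/-- If `A = U Σ Vᵀ` is an SVD, then `V_k Σ_k†` is a Moore–Penrose pseudoinverse
of the sketched matrix `U_kᵀ A`, and consequently the truncated-SVD (tLSTD)
solution `V_k Σ_k† U_kᵀ b` equals `(U_kᵀ A)† (U_kᵀ b)`, the left-sketched LSTD
solution with sketching matrix `S_L = U_kᵀ`. -/
theorem tLSTD_eq_left_sketched_LSTD
    (d k : ℕ) (hk : k ≤ d)
    (A U V : Matrix (Fin d) (Fin d) ℝ) (σ : Fin d → ℝ)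
    (hU : Uᵀ * U = 1) (hV : Vᵀ * V = 1)
    (hσ_nonneg : ∀ i, 0 ≤ σ i) (hσ_dec : Antitone σ)
    (hA : A = U * Matrix.diagonal σ * Vᵀ) :
    IsMoorePenroseInv ((U.submatrix id (Fin.castLE hk))ᵀ * A)
      ((V.submatrix id (Fin.castLE hk)) *
        Matrix.diagonal (fun i : Fin k =>
          if σ (Fin.castLE hk i) = 0 then 0 else (σ (Fin.castLE hk i))⁻¹)) ∧
    ∀ P : Matrix (Fin d) (Fin k) ℝ,
      IsMoorePenroseInv ((U.submatrix id (Fin.castLE hk))ᵀ * A) P →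
      ∀ b : Fin d → ℝ,
        ((V.submatrix id (Fin.castLE hk)) *
          Matrix.diagonal (fun i : Fin k =>
            if σ (Fin.castLE hk i) = 0 then 0 else (σ (Fin.castLE hk i))⁻¹)).mulVec
          ((U.submatrix id (Fin.castLE hk))ᵀ.mulVec b) =
        P.mulVec ((U.submatrix id (Fin.castLE hk))ᵀ.mulVec b) :=
  tLSTD_eq_left_sketched_LSTD_general d k hk A U V σ hU hV hA
end

section
/- Let A ∈ ℝ^{d×d} be symmetric positive semidefinite, let S ∈ ℝ^{k×d} be any matrix, and let P ∈ ℝ^{d×k} be a Moore–Penrose pseudoinverse of S A. Then for all α > 0 and η > 0, the null space of α P (S A) + η A equals the null space of A: for every x ∈ ℝ^d, (α P (S A) + η A) x = 0 if and only if A x = 0. -/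
/-!
`Q = P (S A)` is a symmetric idempotent, hence positive semidefinite, and `Q x = 0` whenever
`A x = 0`. The kernel of a sum of positive semidefinite matrices is the intersection of their
kernels, because `x* (B + C) x = 0` forces both `x* B x` and `x* C x` to vanish.
-/

open Matrix

namespace Matrix

theorem IsHermitian.posSemidef_of_isIdempotentElem {n R : Type*} [Fintype n] [Ring R]
    [PartialOrder R] [StarRing R] [StarOrderedRing R] {Q : Matrix n n R} (hQ : Q.IsHermitian)
    (hQQ : IsIdempotentElem Q) : Q.PosSemidef := by
  simpa only [hQ.eq, hQQ.eq] using posSemidef_conjTranspose_mul_self Q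

open scoped ComplexOrder in
theorem PosSemidef.add_mulVec_eq_zero_iff {n 𝕜 : Type*} [Fintype n] [RCLike 𝕜]
    {B C : Matrix n n 𝕜} (hB : B.PosSemidef) (hC : C.PosSemidef) (x : n → 𝕜) :
    (B + C) *ᵥ x = 0 ↔ B *ᵥ x = 0 ∧ C *ᵥ x = 0 := by
  refine ⟨fun h ↦ ?_, fun ⟨hBx, hCx⟩ ↦ by rw [add_mulVec, hBx, hCx, add_zero]⟩
  have hsum : star x ⬝ᵥ B *ᵥ x + star x ⬝ᵥ C *ᵥ x = 0 := by
    rw [← dotProduct_add, ← add_mulVec, h, dotProduct_zero]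
  obtain ⟨hBx, hCx⟩ :=
    (add_eq_zero_iff_of_nonneg (hB.dotProduct_mulVec_nonneg x) (hC.dotProduct_mulVec_nonneg x)).mp
      hsum
  exact ⟨(hB.dotProduct_mulVec_zero_iff x).mp hBx, (hC.dotProduct_mulVec_zero_iff x).mp hCx⟩

end Matrix

namespace IsMoorePenroseInv

variable {k d : ℕ} {M : Matrix (Fin k) (Fin d) ℝ} {P : Matrix (Fin d) (Fin k) ℝ}

theorem isIdempotentElem_mul (hP : IsMoorePenroseInv M P) : IsIdempotentElem (P * M) := by
  rw [IsIdempotentElem, Matrix.mul_assoc, ← Matrix.mul_assoc M, hP.1]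

theorem posSemidef_mul (hP : IsMoorePenroseInv M P) : (P * M).PosSemidef :=
  IsHermitian.posSemidef_of_isIdempotentElem
    (by rw [IsHermitian, conjTranspose_eq_transpose_of_trivial, hP.2.2.2])
    hP.isIdempotentElem_mul

end IsMoorePenroseInv

/-- If `A` is symmetric positive semidefinite, `S` is any sketching matrix and
`P` is a Moore–Penrose pseudoinverse of `S A`, then for `α, η > 0` the
null space of `α P (S A) + η A` equals the null space of `A`. -/
theorem sketched_preconditioned_matrix_nullspace
    (d k : ℕ) (A : Matrix (Fin d) (Fin d) ℝ)
    (hAsymm : Aᵀ = A)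
    (hApsd : ∀ x : Fin d → ℝ, 0 ≤ x ⬝ᵥ A.mulVec x)
    (S : Matrix (Fin k) (Fin d) ℝ) (P : Matrix (Fin d) (Fin k) ℝ)
    (hP : IsMoorePenroseInv (S * A) P)
    (α η : ℝ) (hα : 0 < α) (hη : 0 < η) :
    ∀ x : Fin d → ℝ,
      (α • (P * (S * A)) + η • A).mulVec x = 0 ↔ A.mulVec x = 0 := by
  intro x
  have hA : A.PosSemidef :=
    .of_dotProduct_mulVec_nonneg (by rwa [IsHermitian, conjTranspose_eq_transpose_of_trivial])
      (by simpa using hApsd)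
  rw [PosSemidef.add_mulVec_eq_zero_iff (hP.posSemidef_mul.smul hα.le) (hA.smul hη.le),
    smul_mulVec, smul_mulVec, smul_eq_zero_iff_right hα.ne', smul_eq_zero_iff_right hη.ne']
  refine ⟨And.right, fun hAx ↦ ⟨?_, hAx⟩⟩
  rw [← mulVec_mulVec, ← mulVec_mulVec, hAx, mulVec_zero, mulVec_zero]
end

section
/- Let A ∈ ℝ^{d×d} be symmetric positive semidefinite and satisfy xᵀ A x ≤ L · xᵀ x for all x ∈ ℝ^d (for some L > 0). Let S ∈ ℝ^{k×d} be any matrix, let P ∈ ℝ^{d×k} be a Moore–Penrose pseudoinverse of S A, let α ∈ (0, 1/2) and let η > 0 satisfy η L ≤ 1/2. Set M := α P (S A) + η A. Then every eigenvalue of M lies in [0, 1): if M v = μ v for some v ≠ 0 and μ ∈ ℝ, then 0 ≤ μ < 1, and moreover μ = 0 if and only if A v = 0. Equivalently, every eigenvalue of I − M lies in (−1, 1], with the value 1 attained exactly on the null space of A. -/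
/-!
Since `P` is a Moore–Penrose pseudoinverse of `S A`, the matrix `Q = P (S A)` is an orthogonal
projection, so `0 ≤ vᵀ Q v ≤ vᵀ v`. For an eigenpair `M v = μ v` this gives
`μ vᵀ v = α vᵀ Q v + η vᵀ A v ∈ [0, (α + η L) vᵀ v]` with `α + η L < 1`. If `μ = 0`, both
quadratic forms vanish, and `A v = 0` because `A` is positive semidefinite; conversely `A v = 0`
forces `Q v = 0` because `Q` factors through `A`, hence `M v = 0`.
-/

open Matrix

namespace Matrix

variable {n : Type*} [Fintype n]

theorem posSemidef_of_transpose_eq_of_isIdempotentElem {Q : Matrix n n ℝ} (hsymm : Qᵀ = Q)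
    (hidem : IsIdempotentElem Q) : Q.PosSemidef := by
  have hQ : Q = Qᴴ * Q := by rw [conjTranspose_eq_transpose_of_trivial, hsymm, hidem.eq]
  rw [hQ]
  exact posSemidef_conjTranspose_mul_self Q

theorem dotProduct_mulVec_mem_Icc_of_transpose_eq_of_isIdempotentElem {Q : Matrix n n ℝ}
    (hsymm : Qᵀ = Q) (hidem : IsIdempotentElem Q) (v : n → ℝ) :
    v ⬝ᵥ Q *ᵥ v ∈ Set.Icc 0 (v ⬝ᵥ v) := by
  classical
  have hQ := (posSemidef_of_transpose_eq_of_isIdempotentElem hsymm hidem).dotProduct_mulVec_nonneg v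
  have hQc := (posSemidef_of_transpose_eq_of_isIdempotentElem
    (by rw [transpose_sub, transpose_one, hsymm]) hidem.one_sub).dotProduct_mulVec_nonneg v
  simp only [star_trivial, sub_mulVec, one_mulVec, dotProduct_sub] at hQ hQc
  exact ⟨hQ, sub_nonneg.mp hQc⟩

theorem one_sub_mulVec_eq_smul_iff {R : Type*} [CommRing R] [DecidableEq n] {M : Matrix n n R}
    {v : n → R} {ν : R} : (1 - M) *ᵥ v = ν • v ↔ M *ᵥ v = (1 - ν) • v := by
  rw [sub_mulVec, one_mulVec, sub_smul, one_smul, sub_eq_iff_eq_add, ← sub_eq_iff_eq_add',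
    eq_comm]

theorem dotProduct_smul_add_smul_mulVec_of_mulVec_eq_smul {Q A : Matrix n n ℝ} {α η μ : ℝ}
    {v : n → ℝ} (h : (α • Q + η • A) *ᵥ v = μ • v) :
    α * (v ⬝ᵥ Q *ᵥ v) + η * (v ⬝ᵥ A *ᵥ v) = μ * (v ⬝ᵥ v) := by
  simpa only [add_mulVec, smul_mulVec, dotProduct_add, dotProduct_smul, smul_eq_mul]
    using congrArg (v ⬝ᵥ ·) h

theorem eigenvalue_mem_Ico_of_projection_add {Q A : Matrix n n ℝ} {α η L μ : ℝ} {v : n → ℝ}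
    (hQsymm : Qᵀ = Q) (hQidem : IsIdempotentElem Q) (hA : A.PosSemidef)
    (hAL : v ⬝ᵥ A *ᵥ v ≤ L * (v ⬝ᵥ v)) (hα : 0 ≤ α) (hη : 0 ≤ η) (hαηL : α + η * L < 1)
    (hv : v ≠ 0) (h : (α • Q + η • A) *ᵥ v = μ • v) : μ ∈ Set.Ico 0 1 := by
  have hvv : 0 < v ⬝ᵥ v := (star_trivial v ▸ dotProduct_star_self_nonneg v).lt_of_ne'
    (dotProduct_self_eq_zero.not.mpr hv)
  obtain ⟨hq₀, hq₁⟩ := dotProduct_mulVec_mem_Icc_of_transpose_eq_of_isIdempotentElem hQsymm hQidem v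
  have ha₀ : 0 ≤ v ⬝ᵥ A *ᵥ v := by simpa using hA.dotProduct_mulVec_nonneg v
  have hμ := dotProduct_smul_add_smul_mulVec_of_mulVec_eq_smul h
  constructor <;> nlinarith

theorem eigenvalue_eq_zero_iff_of_posSemidef_add {Q A : Matrix n n ℝ} {α η μ : ℝ} {v : n → ℝ}
    (hQ : Q.PosSemidef) (hA : A.PosSemidef) (hker : A *ᵥ v = 0 → Q *ᵥ v = 0)
    (hα : 0 < α) (hη : 0 < η) (hv : v ≠ 0) (h : (α • Q + η • A) *ᵥ v = μ • v) :
    μ = 0 ↔ A *ᵥ v = 0 := by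
  constructor
  · rintro rfl
    have hq₀ : 0 ≤ v ⬝ᵥ Q *ᵥ v := by simpa using hQ.dotProduct_mulVec_nonneg v
    have ha₀ : 0 ≤ v ⬝ᵥ A *ᵥ v := by simpa using hA.dotProduct_mulVec_nonneg v
    have hμ := dotProduct_smul_add_smul_mulVec_of_mulVec_eq_smul h
    have ha : star v ⬝ᵥ A *ᵥ v = 0 := by rw [star_trivial]; nlinarith
    exact (hA.dotProduct_mulVec_zero_iff v).mp ha
  · intro hAv
    rw [add_mulVec, smul_mulVec, smul_mulVec, hker hAv, hAv, smul_zero, smul_zero, add_zero,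
      eq_comm, smul_eq_zero] at h
    exact h.resolve_right hv

end Matrix

theorem IsMoorePenroseInv.isIdempotentElem_mul_s6 {k d : ℕ} {M : Matrix (Fin k) (Fin d) ℝ}
    {P : Matrix (Fin d) (Fin k) ℝ} (h : IsMoorePenroseInv M P) : IsIdempotentElem (P * M) := by
  rw [IsIdempotentElem, ← Matrix.mul_assoc, h.2.1]

theorem sketched_preconditioned_matrix_eigenvalue_bounds_general
    (d k : ℕ) (A : Matrix (Fin d) (Fin d) ℝ)
    (L : ℝ)
    (hAsymm : Aᵀ = A)
    (hApsd : ∀ x : Fin d → ℝ, 0 ≤ x ⬝ᵥ A.mulVec x)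
    (hAbound : ∀ x : Fin d → ℝ, x ⬝ᵥ A.mulVec x ≤ L * (x ⬝ᵥ x))
    (S : Matrix (Fin k) (Fin d) ℝ) (P : Matrix (Fin d) (Fin k) ℝ)
    (hP : IsMoorePenroseInv (S * A) P)
    (α η : ℝ) (hα : 0 < α) (hα' : α < 1 / 2) (hη : 0 < η) (hηL : η * L ≤ 1 / 2) :
    (∀ v : Fin d → ℝ, v ≠ 0 → ∀ μ : ℝ,
        (α • (P * (S * A)) + η • A).mulVec v = μ • v →
        (0 ≤ μ ∧ μ < 1 ∧ (μ = 0 ↔ A.mulVec v = 0))) ∧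
    (∀ v : Fin d → ℝ, v ≠ 0 → ∀ ν : ℝ,
        (1 - (α • (P * (S * A)) + η • A)).mulVec v = ν • v →
        (-1 < ν ∧ ν ≤ 1 ∧ (ν = 1 ↔ A.mulVec v = 0))) := by
  have hA : A.PosSemidef := .of_dotProduct_mulVec_nonneg
    (by rwa [IsHermitian, conjTranspose_eq_transpose_of_trivial]) (by simpa using hApsd)
  have hQsymm : (P * (S * A))ᵀ = P * (S * A) := hP.2.2.2
  have hQidem := hP.isIdempotentElem_mul_s6
  have hker (v : Fin d → ℝ) (hAv : A *ᵥ v = 0) : (P * (S * A)) *ᵥ v = 0 := by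
    rw [← mulVec_mulVec, ← mulVec_mulVec, hAv, mulVec_zero, mulVec_zero]
  have hM (v : Fin d → ℝ) (hv : v ≠ 0) (μ : ℝ) (h : (α • (P * (S * A)) + η • A) *ᵥ v = μ • v) :
      0 ≤ μ ∧ μ < 1 ∧ (μ = 0 ↔ A *ᵥ v = 0) :=
    and_assoc.mp ⟨eigenvalue_mem_Ico_of_projection_add hQsymm hQidem hA (hAbound v) hα.le hη.le
        (by linarith) hv h,
      eigenvalue_eq_zero_iff_of_posSemidef_add
        (posSemidef_of_transpose_eq_of_isIdempotentElem hQsymm hQidem) hA (hker v) hα hη hv h⟩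
  refine ⟨hM, fun v hv ν h => ?_⟩
  obtain ⟨hμ₀, hμ₁, hμA⟩ := hM v hv (1 - ν) (one_sub_mulVec_eq_smul_iff.mp h)
  exact ⟨by linarith, by linarith, by rw [← hμA]; constructor <;> intro <;> linarith⟩

/-- With `A` symmetric PSD satisfying `xᵀ A x ≤ L xᵀ x`, `P` a Moore–Penrose
pseudoinverse of `S A`, `α ∈ (0, 1/2)` and `η > 0` with `η L ≤ 1/2`, every
eigenvalue `μ` of `M = α P (S A) + η A` satisfies `0 ≤ μ < 1`, with `μ = 0`
exactly on the null space of `A`; equivalently every eigenvalue `ν` of `I − M`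
satisfies `−1 < ν ≤ 1`, with `ν = 1` exactly on the null space of `A`. -/
theorem sketched_preconditioned_matrix_eigenvalue_bounds
    (d k : ℕ) (A : Matrix (Fin d) (Fin d) ℝ)
    (L : ℝ) (hL : 0 < L)
    (hAsymm : Aᵀ = A)
    (hApsd : ∀ x : Fin d → ℝ, 0 ≤ x ⬝ᵥ A.mulVec x)
    (hAbound : ∀ x : Fin d → ℝ, x ⬝ᵥ A.mulVec x ≤ L * (x ⬝ᵥ x))
    (S : Matrix (Fin k) (Fin d) ℝ) (P : Matrix (Fin d) (Fin k) ℝ)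
    (hP : IsMoorePenroseInv (S * A) P)
    (α η : ℝ) (hα : 0 < α) (hα' : α < 1 / 2) (hη : 0 < η) (hηL : η * L ≤ 1 / 2) :
    (∀ v : Fin d → ℝ, v ≠ 0 → ∀ μ : ℝ,
        (α • (P * (S * A)) + η • A).mulVec v = μ • v →
        (0 ≤ μ ∧ μ < 1 ∧ (μ = 0 ↔ A.mulVec v = 0))) ∧
    (∀ v : Fin d → ℝ, v ≠ 0 → ∀ ν : ℝ,
        (1 - (α • (P * (S * A)) + η • A)).mulVec v = ν • v →
        (-1 < ν ∧ ν ≤ 1 ∧ (ν = 1 ↔ A.mulVec v = 0))) :=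
  sketched_preconditioned_matrix_eigenvalue_bounds_general d k A L hAsymm hApsd hAbound S P hP α η
    hα hα' hη hηL
end

section
/- (Convergence of the left-sketched quasi-Newton iteration.) Let A ∈ ℝ^{d×d} be symmetric positive semidefinite and satisfy xᵀ A x ≤ L · xᵀ x for all x (for some L > 0). Let S ∈ ℝ^{k×d} be any matrix and P ∈ ℝ^{d×k} a Moore–Penrose pseudoinverse of S A. Let α ∈ (0, 1/2) and η > 0 with η L ≤ 1/2, and set B := α P S + η I ∈ ℝ^{d×d}. Suppose b ∈ ℝ^d lies in the range of A. Then there is a unique vector w★ in the range of A with A w★ = b, and the iteration defined by w₀ = 0 and w_{t+1} = w_t + B (b − A w_t) converges to w★ as t → ∞. -/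
/-! With `Q = P S A`, the Moore–Penrose identities make `Q` an orthogonal projection, so the
iteration matrix `T = B A = α Q + η A` is symmetric with spectrum in `[0, α + η L] ⊆ [0, 1)`.
The error `w_t - w★ = (1 - T)^t (w_0 - w★)` therefore decays along every eigenvector of `T`
with a nonzero eigenvalue, while the initial error `-w★` lies in `range A`, which is orthogonal
to `ker T ⊆ ker A`. The solution `w★` exists because `range (A Aᵀ) = range A`, and it is unique
because `range A ∩ ker Aᵀ = 0`. -/

open Matrix Filter

open Topology
open scoped MatrixOrder

namespace Matrix

variable {m n : Type*} [Fintype m] [Fintype n]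

theorem dotProduct_eq_zero_of_mem_range {A : Matrix m n ℝ} {x : m → ℝ}
    (hx : x ∈ LinearMap.range A.mulVecLin) {y : m → ℝ} (hy : Aᵀ *ᵥ y = 0) : y ⬝ᵥ x = 0 := by
  obtain ⟨u, rfl⟩ := hx
  rw [mulVecLin_apply, dotProduct_mulVec, ← mulVec_transpose, hy, zero_dotProduct]

theorem eq_zero_of_mem_range_of_transpose_mulVec_eq_zero {A : Matrix m n ℝ} {x : m → ℝ}
    (hx : x ∈ LinearMap.range A.mulVecLin) (h : Aᵀ *ᵥ x = 0) : x = 0 :=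
  dotProduct_self_eq_zero.mp (dotProduct_eq_zero_of_mem_range hx h)

theorem range_mulVecLin_mul_transpose (A : Matrix m n ℝ) :
    LinearMap.range (A * Aᵀ).mulVecLin = LinearMap.range A.mulVecLin := by
  apply Submodule.eq_of_le_of_finrank_eq
  · rw [mulVecLin_mul]
    exact LinearMap.range_comp_le_range _ _
  · have h := rank_transpose_mul_self Aᵀ
    rwa [transpose_transpose, rank_transpose] at h

theorem sub_eq_pow_mulVec_of_iterate {R : Type*} [CommRing R] [DecidableEq n]
    {A B : Matrix n n R} {b wstar : n → R} (hwstar : A *ᵥ wstar = b) {w : ℕ → n → R}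
    (hw : ∀ t, w (t + 1) = w t + B *ᵥ (b - A *ᵥ w t)) (t : ℕ) :
    w t - wstar = (1 - B * A) ^ t *ᵥ (w 0 - wstar) := by
  induction t with
  | zero => simp
  | succ t ih =>
    rw [pow_succ', ← mulVec_mulVec, ← ih, hw, ← hwstar, sub_mulVec, one_mulVec, ← mulVec_mulVec,
      ← mulVec_sub, ← neg_sub (w t), mulVec_neg, mulVec_neg]
    abel

theorem IsHermitian.eigenvalues_le {T : Matrix n n ℝ} [DecidableEq n] (hT : T.IsHermitian) {c : ℝ}
    (hle : ∀ y, y ⬝ᵥ T *ᵥ y ≤ c * (y ⬝ᵥ y)) (i : n) : hT.eigenvalues i ≤ c := by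
  have hunit : ⇑(hT.eigenvectorBasis i) ⬝ᵥ ⇑(hT.eigenvectorBasis i) = 1 := by
    have h := inner_self_eq_one_of_norm_eq_one (𝕜 := ℝ) (hT.eigenvectorBasis.orthonormal.1 i)
    rwa [EuclideanSpace.inner_eq_star_dotProduct, star_trivial] at h
  simpa [hT.eigenvalues_eq i, hunit] using hle (hT.eigenvectorBasis i)

theorem IsHermitian.one_sub_pow_eq {T : Matrix n n ℝ} [DecidableEq n] (hT : T.IsHermitian)
    (t : ℕ) :
    (1 - T) ^ t = hT.eigenvectorUnitary * diagonal (fun i => (1 - hT.eigenvalues i) ^ t) *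
      star (hT.eigenvectorUnitary : Matrix n n ℝ) := by
  conv_lhs =>
    rw [hT.spectral_theorem, ← map_one (Unitary.conjStarAlgAut ℝ _ hT.eigenvectorUnitary),
      ← map_sub, ← map_pow]
  rw [Unitary.conjStarAlgAut_apply, ← diagonal_one, diagonal_sub, diagonal_pow]
  rfl

theorem PosSemidef.tendsto_one_sub_pow_mulVec {T : Matrix n n ℝ} [DecidableEq n]
    (hT : T.PosSemidef) {c : ℝ} (hc : c < 2) (hle : ∀ y, y ⬝ᵥ T *ᵥ y ≤ c * (y ⬝ᵥ y))
    {x : n → ℝ} (hx : ∀ y, T *ᵥ y = 0 → y ⬝ᵥ x = 0) :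
    Tendsto (fun t : ℕ => (1 - T) ^ t *ᵥ x) atTop (𝓝 0) := by
  set U : Matrix n n ℝ := ↑hT.isHermitian.eigenvectorUnitary
  set μ := hT.isHermitian.eigenvalues
  have hcoord : ∀ i, (star U *ᵥ x) i = ⇑(hT.isHermitian.eigenvectorBasis i) ⬝ᵥ x := by
    intro i
    simp [U, mulVec, dotProduct]
  have hdiag : Tendsto (fun t : ℕ => diagonal (fun i => (1 - μ i) ^ t) *ᵥ (star U *ᵥ x))
      atTop (𝓝 0) := by
    refine tendsto_pi_nhds.2 fun i => ?_
    simp only [mulVec_diagonal]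
    rcases (hT.eigenvalues_nonneg i).eq_or_lt with hμ | hμ
    · have hker : T *ᵥ ⇑(hT.isHermitian.eigenvectorBasis i) = 0 := by
        rw [hT.isHermitian.mulVec_eigenvectorBasis, ← hμ, zero_smul]
      simp [hcoord, hx _ hker]
    · have hμle := hT.isHermitian.eigenvalues_le hle i
      have habs : |1 - μ i| < 1 := abs_lt.2 ⟨by linarith, by linarith⟩
      simpa using (tendsto_pow_atTop_nhds_zero_of_abs_lt_one habs).mul_const ((star U *ᵥ x) i)
  have hU : Continuous (U *ᵥ ·) := continuous_const.matrix_mulVec continuous_id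
  simpa [Function.comp_def, hT.isHermitian.one_sub_pow_eq, ← mulVec_mulVec] using
    (hU.tendsto 0).comp hdiag

theorem tendsto_preconditioned_richardson {A B : Matrix n n ℝ} [DecidableEq n] {b wstar : n → ℝ}
    (hwstar : A *ᵥ wstar = b) (hBA : (B * A).PosSemidef) {c : ℝ} (hc : c < 2)
    (hle : ∀ y, y ⬝ᵥ (B * A) *ᵥ y ≤ c * (y ⬝ᵥ y)) {w : ℕ → n → ℝ}
    (hker : ∀ y, (B * A) *ᵥ y = 0 → y ⬝ᵥ (w 0 - wstar) = 0)
    (hw : ∀ t, w (t + 1) = w t + B *ᵥ (b - A *ᵥ w t)) :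
    Tendsto w atTop (𝓝 wstar) :=
  tendsto_sub_nhds_zero_iff.1 <| (tendsto_congr (sub_eq_pow_mulVec_of_iterate hwstar hw)).2 <|
    hBA.tendsto_one_sub_pow_mulVec hc hle hker

theorem PosSemidef.mulVec_eq_zero_of_add_mulVec_eq_zero {X Y : Matrix n n ℝ} (hX : X.PosSemidef)
    (hY : Y.PosSemidef) {y : n → ℝ} (h : (X + Y) *ᵥ y = 0) : Y *ᵥ y = 0 := by
  have hsum : y ⬝ᵥ X *ᵥ y + y ⬝ᵥ Y *ᵥ y = 0 := by
    rw [← dotProduct_add, ← add_mulVec, h, dotProduct_zero]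
  have hXy := hX.dotProduct_mulVec_nonneg y
  have hYy := hY.dotProduct_mulVec_nonneg y
  rw [star_trivial] at hXy hYy
  exact (hY.dotProduct_mulVec_zero_iff y).1 (by rw [star_trivial]; linarith)

theorem dotProduct_mulVec_le_of_isStarProjection [DecidableEq n] {Q : Matrix n n ℝ}
    (hQ : IsStarProjection Q) (y : n → ℝ) : y ⬝ᵥ Q *ᵥ y ≤ y ⬝ᵥ y := by
  have h := (nonneg_iff_posSemidef.1 hQ.one_sub_nonneg).dotProduct_mulVec_nonneg y
  rw [star_trivial, sub_mulVec, one_mulVec, dotProduct_sub] at h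
  linarith

theorem dotProduct_smul_add_smul_mulVec_le [DecidableEq n] {Q A : Matrix n n ℝ}
    (hQ : IsStarProjection Q) {L : ℝ} (hA : ∀ y, y ⬝ᵥ A *ᵥ y ≤ L * (y ⬝ᵥ y)) {α η : ℝ}
    (hα : 0 ≤ α) (hη : 0 ≤ η) (y : n → ℝ) : y ⬝ᵥ (α • Q + η • A) *ᵥ y ≤ (α + η * L) * (y ⬝ᵥ y) := by
  have hQy := mul_le_mul_of_nonneg_left (dotProduct_mulVec_le_of_isStarProjection hQ y) hα
  have hAy := mul_le_mul_of_nonneg_left (hA y) hη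
  rw [add_mulVec, smul_mulVec, smul_mulVec, dotProduct_add, dotProduct_smul, dotProduct_smul,
    smul_eq_mul, smul_eq_mul]
  linarith

end Matrix

theorem IsMoorePenroseInv.isStarProjection_mul {k d : ℕ} {M : Matrix (Fin k) (Fin d) ℝ}
    {P : Matrix (Fin d) (Fin k) ℝ} (hP : IsMoorePenroseInv M P) : IsStarProjection (P * M) :=
  ⟨by rw [IsIdempotentElem, ← Matrix.mul_assoc, hP.2.1],
    by rw [IsSelfAdjoint, star_eq_conjTranspose, conjTranspose_eq_transpose_of_trivial, hP.2.2.2]⟩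

theorem sketched_ATD_expected_update_converges_general
    (d k : ℕ) (A : Matrix (Fin d) (Fin d) ℝ)
    (L : ℝ)
    (hAsymm : Aᵀ = A)
    (hApsd : ∀ x : Fin d → ℝ, 0 ≤ x ⬝ᵥ A.mulVec x)
    (hAbound : ∀ x : Fin d → ℝ, x ⬝ᵥ A.mulVec x ≤ L * (x ⬝ᵥ x))
    (S : Matrix (Fin k) (Fin d) ℝ) (P : Matrix (Fin d) (Fin k) ℝ)
    (hP : IsMoorePenroseInv (S * A) P)
    (α η : ℝ) (hα : 0 < α) (hα' : α < 1 / 2) (hη : 0 < η) (hηL : η * L ≤ 1 / 2)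
    (B : Matrix (Fin d) (Fin d) ℝ) (hB : B = α • (P * S) + η • (1 : Matrix (Fin d) (Fin d) ℝ))
    (b : Fin d → ℝ) (hb : b ∈ LinearMap.range A.mulVecLin) :
    ∃ wstar : Fin d → ℝ,
      (wstar ∈ LinearMap.range A.mulVecLin ∧ A.mulVec wstar = b) ∧
      (∀ w' : Fin d → ℝ,
        w' ∈ LinearMap.range A.mulVecLin → A.mulVec w' = b → w' = wstar) ∧
      (∀ w : ℕ → Fin d → ℝ, w 0 = 0 →
        (∀ t, w (t + 1) = w t + B.mulVec (b - A.mulVec (w t))) →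
        Tendsto w atTop (nhds wstar)) := by
  have hA : A.PosSemidef := .of_dotProduct_mulVec_nonneg
    (by rw [IsHermitian, conjTranspose_eq_transpose_of_trivial, hAsymm]) (by simpa using hApsd)
  have hQ := hP.isStarProjection_mul
  obtain ⟨z, rfl⟩ : b ∈ LinearMap.range (A * Aᵀ).mulVecLin := by
    rwa [range_mulVecLin_mul_transpose]
  have hwstar : A *ᵥ (A *ᵥ z) = (A * Aᵀ).mulVecLin z := by
    rw [hAsymm, mulVecLin_apply, mulVec_mulVec]
  refine ⟨A *ᵥ z, ⟨⟨z, rfl⟩, hwstar⟩, fun w' hw' hAw' => ?_, fun w hw0 hw => ?_⟩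
  · refine sub_eq_zero.1 (eq_zero_of_mem_range_of_transpose_mulVec_eq_zero
      (sub_mem hw' ⟨z, rfl⟩) ?_)
    rw [hAsymm, mulVec_sub, hAw', hwstar, sub_self]
  · have hBA : B * A = α • (P * (S * A)) + η • A := by
      rw [hB, Matrix.add_mul, Matrix.smul_mul, Matrix.smul_mul, Matrix.one_mul, Matrix.mul_assoc]
    have hαQ := (nonneg_iff_posSemidef.1 hQ.nonneg).smul hα.le
    have hηA := hA.smul hη.le
    have hker : ∀ y, (B * A) *ᵥ y = 0 → A *ᵥ y = 0 := fun y hy => by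
      have h := hαQ.mulVec_eq_zero_of_add_mulVec_eq_zero hηA (hBA ▸ hy)
      rwa [smul_mulVec, smul_eq_zero, or_iff_right hη.ne'] at h
    refine tendsto_preconditioned_richardson hwstar (hBA ▸ hαQ.add hηA) (c := α + η * L)
      (by linarith) (hBA ▸ dotProduct_smul_add_smul_mulVec_le hQ hAbound hα.le hη.le) (fun y hy => ?_) hw
    refine dotProduct_eq_zero_of_mem_range (sub_mem (hw0 ▸ zero_mem _) ⟨z, rfl⟩) ?_
    rw [hAsymm, hker y hy]

/-- Convergence of the left-sketched quasi-Newton (ATD) iteration: with `A`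
symmetric PSD satisfying `xᵀ A x ≤ L xᵀ x`, `P` a Moore–Penrose pseudoinverse
of `S A`, `α ∈ (0, 1/2)`, `η > 0` with `η L ≤ 1/2`, `B = α P S + η I`, and `b`
in the range of `A`, there is a unique `w★` in the range of `A` with
`A w★ = b`, and the iteration `w₀ = 0`, `w_{t+1} = w_t + B (b − A w_t)`
converges to `w★`. -/
theorem sketched_ATD_expected_update_converges
    (d k : ℕ) (A : Matrix (Fin d) (Fin d) ℝ)
    (L : ℝ) (hL : 0 < L)
    (hAsymm : Aᵀ = A)
    (hApsd : ∀ x : Fin d → ℝ, 0 ≤ x ⬝ᵥ A.mulVec x)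
    (hAbound : ∀ x : Fin d → ℝ, x ⬝ᵥ A.mulVec x ≤ L * (x ⬝ᵥ x))
    (S : Matrix (Fin k) (Fin d) ℝ) (P : Matrix (Fin d) (Fin k) ℝ)
    (hP : IsMoorePenroseInv (S * A) P)
    (α η : ℝ) (hα : 0 < α) (hα' : α < 1 / 2) (hη : 0 < η) (hηL : η * L ≤ 1 / 2)
    (B : Matrix (Fin d) (Fin d) ℝ) (hB : B = α • (P * S) + η • (1 : Matrix (Fin d) (Fin d) ℝ))
    (b : Fin d → ℝ) (hb : b ∈ LinearMap.range A.mulVecLin) :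
    ∃ wstar : Fin d → ℝ,
      (wstar ∈ LinearMap.range A.mulVecLin ∧ A.mulVec wstar = b) ∧
      (∀ w' : Fin d → ℝ,
        w' ∈ LinearMap.range A.mulVecLin → A.mulVec w' = b → w' = wstar) ∧
      (∀ w : ℕ → Fin d → ℝ, w 0 = 0 →
        (∀ t, w (t + 1) = w t + B.mulVec (b - A.mulVec (w t))) →
        Tendsto w atTop (nhds wstar)) :=
  sketched_ATD_expected_update_converges_general d k A L hAsymm hApsd hAbound S P hP α η hα hα' hη
    hηL B hB b hb
end
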